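/- arXiv:2503.22377 — 8 statements merged into one kernel-verified Lean document; each statement's English description precedes it below -/
import Mathlib

section
/- Let G be a group and C a nonempty subset of G. Then the following are equivalent: (i) for all c, x ∈ C, both c * x * c⁻¹ ∈ C and c⁻¹ * x * c ∈ C; (ii) for every x ∈ C and every h in the subgroup ⟨C⟩ generated by C, h * x * h⁻¹ ∈ C; (iii) C is a union of conjugacy classes of ⟨C⟩, i.e., C = ⋃_{x ∈ C} { h * x * h⁻¹ | h ∈ ⟨C⟩ }. -/
theorem conjugation_quandle_characterization {G : Type*} [Group G] (C : Set G)
    (hne : C.Nonempty) :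
    List.TFAE [
      -- (i) closed under conjugation by elements of C and their inverses
      ∀ c ∈ C, ∀ x ∈ C, c * x * c⁻¹ ∈ C ∧ c⁻¹ * x * c ∈ C,
      -- (ii) closed under conjugation by elements of ⟨C⟩
      ∀ x ∈ C, ∀ h ∈ Subgroup.closure C, h * x * h⁻¹ ∈ C,
      -- (iii) C is the union of the conjugacy classes (in ⟨C⟩) of its elements
      C = ⋃ x ∈ C, {y : G | ∃ h ∈ Subgroup.closure C, h * x * h⁻¹ = y}] := by
  tfae_have 1 → 2 := by
    intro h1 x hx h hh
    have key : (∀ x ∈ C, h * x * h⁻¹ ∈ C) ∧ (∀ x ∈ C, h⁻¹ * x * h ∈ C) := by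
      refine Subgroup.closure_induction
        (p := fun h _ => (∀ x ∈ C, h * x * h⁻¹ ∈ C) ∧ (∀ x ∈ C, h⁻¹ * x * h ∈ C))
        ?_ ?_ ?_ ?_ hh
      · intro c hc
        exact ⟨fun x hx => (h1 c hc x hx).1, fun x hx => (h1 c hc x hx).2⟩
      · simp
      · intro a b _ _ ha hb
        constructor
        · intro x hx
          have := ha.1 _ (hb.1 x hx)
          simpa [mul_assoc] using this
        · intro x hx
          have := hb.2 _ (ha.2 x hx)
          simpa [mul_assoc] using this
      · intro a _ ha
        exact ⟨fun x hx => by simpa using ha.2 x hx, fun x hx => by simpa using ha.1 x hx⟩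
    exact key.1 x hx
  tfae_have 2 → 3 := by
    intro h2
    ext y
    simp only [Set.mem_iUnion, Set.mem_setOf_eq]
    constructor
    · intro hy
      exact ⟨y, hy, 1, one_mem _, by simp⟩
    · rintro ⟨x, hx, h, hh, rfl⟩
      exact h2 x hx h hh
  tfae_have 3 → 1 := by
    intro h3 c hc x hx
    have hcC : c ∈ Subgroup.closure C := Subgroup.subset_closure hc
    constructor
    · rw [h3]
      simp only [Set.mem_iUnion, Set.mem_setOf_eq]
      exact ⟨x, hx, c, hcC, rfl⟩
    · rw [h3]
      simp only [Set.mem_iUnion, Set.mem_setOf_eq]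
      exact ⟨x, hx, c⁻¹, inv_mem hcC, by group⟩
  tfae_finish
end

section
/- Let G be a group and C a conjugation-closed subset of G. Then the subgroup of the permutation group of C generated by the left translations { L_c | c ∈ C } acts transitively on C if and only if C is a single conjugacy class of ⟨C⟩, i.e., there exists e ∈ C such that C = { h * e * h⁻¹ | h ∈ ⟨C⟩ }. -/
/-- A subset `C` of a group `G` is conjugation-closed if it is nonempty and closed
under conjugation by elements of the subgroup generated by `C`. -/
def ConjClosed {G : Type*} [Group G] (C : Set G) : Prop :=
  C.Nonempty ∧ ∀ x ∈ C, ∀ h ∈ Subgroup.closure C, h * x * h⁻¹ ∈ C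

/-- The left translation `L_c : x ↦ c * x * c⁻¹` of a conjugation-closed subset. -/
def leftTrans {G : Type*} [Group G] {C : Set G} (hC : ConjClosed C) (c : C) :
    Equiv.Perm C where
  toFun x := ⟨c * x * (c : G)⁻¹, hC.2 x x.2 c (Subgroup.subset_closure c.2)⟩
  invFun x := ⟨(c : G)⁻¹ * x * c, by
    have := hC.2 x x.2 (c : G)⁻¹ (inv_mem (Subgroup.subset_closure c.2))
    simpa using this⟩
  left_inv x := Subtype.ext (by group)
  right_inv x := Subtype.ext (by group)

/-!
The translation `L_c` is conjugation by `c`, so `h ↦ (x ↦ h * x * h⁻¹)` is a homomorphism from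
`⟨C⟩` to the permutations of `C` whose image is generated by the `L_c`. Hence the orbits of the
group generated by the left translations are exactly the `⟨C⟩`-conjugacy classes inside `C`.
-/

lemma forall_exists_conj_eq_iff {G : Type*} [Group G] {H : Subgroup G} {C : Set G}
    (hne : C.Nonempty) (hconj : ∀ x ∈ C, ∀ h ∈ H, h * x * h⁻¹ ∈ C) :
    (∀ a ∈ C, ∀ b ∈ C, ∃ h ∈ H, h * a * h⁻¹ = b) ↔
      ∃ e ∈ C, C = {x : G | ∃ h ∈ H, h * e * h⁻¹ = x} := by
  constructor
  · intro htrans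
    obtain ⟨e, he⟩ := hne
    refine ⟨e, he, Set.Subset.antisymm (fun x hx => htrans e he x hx) ?_⟩
    rintro x ⟨h, hh, rfl⟩
    exact hconj e he h hh
  · rintro ⟨e, -, rfl⟩ a ⟨h, hh, rfl⟩ b ⟨k, hk, rfl⟩
    exact ⟨k * h⁻¹, mul_mem hk (inv_mem hh), by group⟩

namespace ConjClosed

variable {G : Type*} [Group G] {C : Set G}

def conjPerm (hC : ConjClosed C) : Subgroup.closure C →* Equiv.Perm C where
  toFun h :=
    { toFun x := ⟨h * x * (h : G)⁻¹, hC.2 x x.2 h h.2⟩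
      invFun x := ⟨(h : G)⁻¹ * x * h, by simpa using hC.2 x x.2 _ (inv_mem h.2)⟩
      left_inv x := Subtype.ext (by group)
      right_inv x := Subtype.ext (by group) }
  map_one' := by ext; simp
  map_mul' h k := by ext; simp [mul_assoc]

lemma leftTrans_eq_conjPerm (hC : ConjClosed C) (c : C) :
    leftTrans hC c = hC.conjPerm ⟨c, Subgroup.subset_closure c.2⟩ :=
  rfl

lemma closure_range_leftTrans (hC : ConjClosed C) :
    Subgroup.closure (Set.range (leftTrans hC)) = hC.conjPerm.range := by
  have hgen : Set.range (leftTrans hC) = hC.conjPerm '' ((↑) ⁻¹' C) := by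
    ext π
    constructor
    · rintro ⟨c, rfl⟩
      exact ⟨⟨c, Subgroup.subset_closure c.2⟩, c.2, (leftTrans_eq_conjPerm hC c).symm⟩
    · rintro ⟨h, hh, rfl⟩
      exact ⟨⟨h, hh⟩, leftTrans_eq_conjPerm hC _⟩
  rw [hgen, ← MonoidHom.map_closure, Subgroup.closure_closure_coe_preimage,
    MonoidHom.range_eq_map]

lemma exists_mem_closure_leftTrans_apply_eq_iff (hC : ConjClosed C) (a b : C) :
    (∃ π ∈ Subgroup.closure (Set.range (leftTrans hC)), π a = b) ↔
      ∃ h ∈ Subgroup.closure C, h * (a : G) * h⁻¹ = b := by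
  rw [closure_range_leftTrans]
  constructor
  · rintro ⟨-, ⟨h, rfl⟩, hab⟩
    exact ⟨h, h.2, congrArg Subtype.val hab⟩
  · rintro ⟨h, hh, hab⟩
    exact ⟨hC.conjPerm ⟨h, hh⟩, ⟨_, rfl⟩, Subtype.ext hab⟩

end ConjClosed

/-- The conjugation quandle on a conjugation-closed subset `C` is connected (the group
generated by the left translations acts transitively on `C`) iff `C` is a single
conjugacy class of the subgroup `⟨C⟩`. -/
theorem conjugation_quandle_connected_iff {G : Type*} [Group G] {C : Set G}
    (hC : ConjClosed C) :
    (∀ a b : C, ∃ π ∈ Subgroup.closure (Set.range (leftTrans hC)), π a = b) ↔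
      ∃ e ∈ C, C = {x : G | ∃ h ∈ Subgroup.closure C, h * e * h⁻¹ = x} := by
  simp only [hC.exists_mem_closure_leftTrans_apply_eq_iff, Subtype.forall]
  exact forall_exists_conj_eq_iff hC.1 hC.2
end

section
/- Let G be a group, C a finite conjugation-closed subset of G, and c ∈ C. Then the left translation L_c contains a regular cycle if and only if there exists z ∈ C such that for every k ∈ ℤ, if c^k * z = z * c^k then c^k commutes with every element of C (equivalently, c^k lies in the center of the subgroup ⟨C⟩ generated by C). -/
/-- A permutation contains a regular cycle if some cycle's length (the minimal period
of one of its points) is divisible by the length of every cycle. -/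
def ContainsRegularCycle {Q : Type*} (π : Equiv.Perm Q) : Prop :=
  ∃ z : Q, ∀ x : Q, Function.minimalPeriod (⇑π) x ∣ Function.minimalPeriod (⇑π) z

theorem leftTrans_containsRegularCycle_iff {G : Type*} [Group G] {C : Set G}
    (hC : ConjClosed C) (hfin : C.Finite) (c : G) (hc : c ∈ C) :
    ContainsRegularCycle (leftTrans hC ⟨c, hc⟩) ↔
      ∃ z ∈ C, ∀ k : ℤ, c ^ k * z = z * c ^ k → ∀ x ∈ C, c ^ k * x = x * c ^ k := by
  haveI : Finite C := hfin.to_subtype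
  set π := leftTrans hC ⟨c, hc⟩ with hπ
  have hiter : ∀ (n : ℕ) (x : C), ((⇑π)^[n] x : G) = c ^ n * x * (c ^ n)⁻¹ := by
    intro n
    induction n with
    | zero => intro x; simp
    | succ n ih =>
      intro x
      rw [Function.iterate_succ_apply']
      have : ((π ((⇑π)^[n] x) : C) : G) = c * ((⇑π)^[n] x : G) * c⁻¹ := rfl
      rw [this, ih x, pow_succ]
      group
  -- period in ℕ
  have keyN : ∀ (x : C) (n : ℕ),
      (c ^ n * (x : G) = x * c ^ n ↔ Function.minimalPeriod (⇑π) x ∣ n) := by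
    intro x n
    rw [← Function.isPeriodicPt_iff_minimalPeriod_dvd]
    constructor
    · intro h
      show (⇑π)^[n] x = x
      apply Subtype.ext
      rw [hiter n x, h]
      group
    · intro h
      have := congrArg Subtype.val h
      rw [hiter n x] at this
      calc c ^ n * (x : G) = (c ^ n * x * (c ^ n)⁻¹) * c ^ n := by group
        _ = x * c ^ n := by rw [this]
  -- period in ℤ
  have keyZ : ∀ (x : C) (k : ℤ),
      (c ^ k * (x : G) = x * c ^ k ↔ (Function.minimalPeriod (⇑π) x : ℤ) ∣ k) := by
    intro x k
    rcases Int.natAbs_eq k with h | h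
    · rw [h, zpow_natCast, Int.natCast_dvd_natCast]
      exact keyN x k.natAbs
    · rw [h, dvd_neg, Int.natCast_dvd_natCast, zpow_neg, zpow_natCast]
      have : Commute (c ^ k.natAbs)⁻¹ (x : G) ↔ Commute (c ^ k.natAbs) (x : G) :=
        Commute.inv_left_iff
      exact this.trans (keyN x k.natAbs)
  constructor
  · rintro ⟨z, hz⟩
    refine ⟨(z : G), z.2, fun k hk x hx => ?_⟩
    have hdz : (Function.minimalPeriod (⇑π) z : ℤ) ∣ k := (keyZ z k).1 hk
    exact (keyZ ⟨x, hx⟩ k).2 (dvd_trans (Int.natCast_dvd_natCast.2 (hz ⟨x, hx⟩)) hdz)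
  · rintro ⟨z, hzC, hz⟩
    refine ⟨⟨z, hzC⟩, fun x => ?_⟩
    set p := Function.minimalPeriod (⇑π) ⟨z, hzC⟩
    have hcz : c ^ (p : ℤ) * z = z * c ^ (p : ℤ) := (keyZ ⟨z, hzC⟩ p).2 dvd_rfl
    have := hz (p : ℤ) hcz (x : G) x.2
    have := (keyZ x (p : ℤ)).1 this
    exact_mod_cast this
end

section
/- Let G₁ and G₂ be groups, and let C₁ ⊆ G₁ and C₂ ⊆ G₂ be finite conjugation-closed subsets. Suppose every left translation of C₁ contains a regular cycle and every left translation of C₂ contains a regular cycle. Then in the product group G₁ × G₂, every left translation of the conjugation-closed subset C₁ × C₂ contains a regular cycle. -/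
lemma iterate_leftTrans {G : Type*} [Group G] {C : Set G} (hC : ConjClosed C) (c : C)
    (n : ℕ) (x : C) :
    (((⇑(leftTrans hC c))^[n] x : C) : G) = (c : G) ^ n * x * ((c : G) ^ n)⁻¹ := by
  induction n with
  | zero => simp
  | succ n ih =>
    rw [Function.iterate_succ_apply']
    show (c : G) * _ * (c : G)⁻¹ = _
    rw [ih]
    group

lemma isPeriodicPt_leftTrans_iff {G : Type*} [Group G] {C : Set G} (hC : ConjClosed C)
    (c : C) (n : ℕ) (x : C) :
    Function.IsPeriodicPt (⇑(leftTrans hC c)) n x ↔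
      (c : G) ^ n * x * ((c : G) ^ n)⁻¹ = (x : G) := by
  rw [Function.IsPeriodicPt, Function.IsFixedPt, Subtype.ext_iff, iterate_leftTrans]

/-- If every left translation of the finite conjugation-closed sets `C₁` and `C₂`
contains a regular cycle, then `C₁ ×ˢ C₂` is conjugation-closed in `G₁ × G₂` and
every left translation of it contains a regular cycle. -/
theorem prod_hayashi {G₁ G₂ : Type*} [Group G₁] [Group G₂] {C₁ : Set G₁} {C₂ : Set G₂}
    (h1 : ConjClosed C₁) (h2 : ConjClosed C₂) (h1f : C₁.Finite) (h2f : C₂.Finite)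
    (hreg1 : ∀ c : C₁, ContainsRegularCycle (leftTrans h1 c))
    (hreg2 : ∀ c : C₂, ContainsRegularCycle (leftTrans h2 c)) :
    ConjClosed (C₁ ×ˢ C₂) ∧
      ∀ (h12 : ConjClosed (C₁ ×ˢ C₂)) (c : C₁ ×ˢ C₂),
        ContainsRegularCycle (leftTrans h12 c) := by
  constructor
  · constructor
    · exact h1.1.prod h2.1
    · intro x hx h hh
      have hsub : Subgroup.closure (C₁ ×ˢ C₂) ≤
          (Subgroup.closure C₁).prod (Subgroup.closure C₂) := by
        rw [Subgroup.closure_le]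
        intro g hg
        exact ⟨Subgroup.subset_closure hg.1, Subgroup.subset_closure hg.2⟩
      have hh' := hsub hh
      exact ⟨h1.2 x.1 hx.1 h.1 hh'.1, h2.2 x.2 hx.2 h.2 hh'.2⟩
  · intro h12 c
    obtain ⟨z₁, hz₁⟩ := hreg1 ⟨(c : G₁ × G₂).1, c.2.1⟩
    obtain ⟨z₂, hz₂⟩ := hreg2 ⟨(c : G₁ × G₂).2, c.2.2⟩
    refine ⟨⟨((z₁ : G₁), (z₂ : G₂)), z₁.2, z₂.2⟩, fun x => ?_⟩
    set z : C₁ ×ˢ C₂ := ⟨((z₁ : G₁), (z₂ : G₂)), z₁.2, z₂.2⟩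
    set N := Function.minimalPeriod (⇑(leftTrans h12 c)) z with hN
    rw [← Function.isPeriodicPt_iff_minimalPeriod_dvd, isPeriodicPt_leftTrans_iff]
    have hzN : Function.IsPeriodicPt (⇑(leftTrans h12 c)) N z :=
      Function.isPeriodicPt_minimalPeriod _ _
    rw [isPeriodicPt_leftTrans_iff] at hzN
    have hzN1 : ((c : G₁ × G₂).1) ^ N * (z₁ : G₁) * (((c : G₁ × G₂).1) ^ N)⁻¹ = (z₁ : G₁) :=
      congrArg Prod.fst hzN
    have hzN2 : ((c : G₁ × G₂).2) ^ N * (z₂ : G₂) * (((c : G₁ × G₂).2) ^ N)⁻¹ = (z₂ : G₂) :=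
      congrArg Prod.snd hzN
    set x₁ : C₁ := ⟨(x : G₁ × G₂).1, x.2.1⟩
    set x₂ : C₂ := ⟨(x : G₁ × G₂).2, x.2.2⟩
    have hd1 : Function.minimalPeriod (⇑(leftTrans h1 ⟨(c : G₁ × G₂).1, c.2.1⟩)) x₁ ∣ N := by
      refine dvd_trans (hz₁ x₁) ?_
      rw [← Function.isPeriodicPt_iff_minimalPeriod_dvd, isPeriodicPt_leftTrans_iff]
      exact hzN1
    have hd2 : Function.minimalPeriod (⇑(leftTrans h2 ⟨(c : G₁ × G₂).2, c.2.2⟩)) x₂ ∣ N := by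
      refine dvd_trans (hz₂ x₂) ?_
      rw [← Function.isPeriodicPt_iff_minimalPeriod_dvd, isPeriodicPt_leftTrans_iff]
      exact hzN2
    have hx1 : ((c : G₁ × G₂).1) ^ N * (x₁ : G₁) * (((c : G₁ × G₂).1) ^ N)⁻¹ = (x₁ : G₁) := by
      have := (Function.isPeriodicPt_iff_minimalPeriod_dvd.mpr hd1)
      rwa [isPeriodicPt_leftTrans_iff] at this
    have hx2 : ((c : G₁ × G₂).2) ^ N * (x₂ : G₂) * (((c : G₁ × G₂).2) ^ N)⁻¹ = (x₂ : G₂) := by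
      have := (Function.isPeriodicPt_iff_minimalPeriod_dvd.mpr hd2)
      rwa [isPeriodicPt_leftTrans_iff] at this
    exact Prod.ext hx1 hx2
end

section
/- Let ι be a finite index type and (G i) a family of groups indexed by ι such that each G i is good. Then the direct product Π i, G i is good. -/
/-- The conjugacy class of `e` in `G`. -/
def conjClass {G : Type*} [Group G] (e : G) : Set G := {x | ∃ g : G, g * e * g⁻¹ = x}

/-- A conjugacy class `C` is good in `G` if for every `c ∈ C` there is `z ∈ C` such
that every power of `c` commuting with `z` commutes with every element of `⟨C⟩`. -/
def GoodClass {G : Type*} [Group G] (C : Set G) : Prop :=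
  ∀ c ∈ C, ∃ z ∈ C, ∀ k : ℤ, c ^ k * z = z * c ^ k →
    ∀ h ∈ Subgroup.closure C, c ^ k * h = h * c ^ k

/-- A group is good if all of its finite conjugacy classes are good in it. -/
def GoodGroup (G : Type*) [Group G] : Prop :=
  ∀ e : G, (conjClass e).Finite → GoodClass (conjClass e)

lemma pi_mem_conjClass {ι : Type*} {G : ι → Type*} [∀ i, Group (G i)]
    (e x : ∀ i, G i) : x ∈ conjClass e ↔ ∀ i, x i ∈ conjClass (e i) := by
  constructor
  · rintro ⟨g, rfl⟩ i; exact ⟨g i, rfl⟩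
  · intro h
    choose g hg using h
    exact ⟨g, funext fun i => hg i⟩

lemma eval_image_conjClass {ι : Type*} {G : ι → Type*} [∀ i, Group (G i)]
    (e : ∀ i, G i) (i : ι) :
    (fun x : ∀ i, G i => x i) '' conjClass e = conjClass (e i) := by
  classical
  ext y
  constructor
  · rintro ⟨x, ⟨g, rfl⟩, rfl⟩; exact ⟨g i, rfl⟩
  · rintro ⟨g, rfl⟩
    refine ⟨Function.update e i (g * e i * g⁻¹), ⟨Function.update 1 i g, ?_⟩,
      by simp⟩
    funext j
    by_cases hj : j = i
    · subst hj; simp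
    · simp [Function.update_of_ne hj]

/-- A finite direct product of good groups is good. -/
theorem goodGroup_pi {ι : Type*} [Finite ι] (G : ι → Type*) [∀ i, Group (G i)]
    (hG : ∀ i, GoodGroup (G i)) : GoodGroup (∀ i, G i) := by
  classical
  intro e hfin c hc
  have hci : ∀ i, c i ∈ conjClass (e i) := (pi_mem_conjClass e c).mp hc
  have hfin' : ∀ i, (conjClass (e i)).Finite := fun i => by
    rw [← eval_image_conjClass e i]; exact hfin.image _
  choose z hz hzz using fun i => hG i (e i) (hfin' i) (c i) (hci i)
  refine ⟨z, (pi_mem_conjClass e z).mpr hz, ?_⟩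
  intro k hk h hh
  funext i
  have hpow : ∀ (x : ∀ i, G i), (x ^ k) i = x i ^ k := fun x => rfl
  have hki : (c i) ^ k * z i = z i * (c i) ^ k := by
    have := congrFun hk i
    simpa [hpow] using this
  have hhi : h i ∈ Subgroup.closure (conjClass (e i)) := by
    have hm := Subgroup.mem_map_of_mem (Pi.evalMonoidHom G i) hh
    rw [MonoidHom.map_closure] at hm
    have himg : (Pi.evalMonoidHom G i) '' conjClass e = conjClass (e i) :=
      eval_image_conjClass e i
    rwa [himg] at hm
  have := hzz i k hki (h i) hhi
  simpa [hpow] using this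
end

section
/- Let p be a prime and G a finite p-group (every element of G has order a power of p). Then G is good. -/
/-- For `c z : G` and `n` with `c ^ n = 1`, the set of exponents `k` such that `c ^ k`
commutes with `z` is generated by a divisor of `n`. -/
lemma exists_gen {G : Type*} [Group G] (c z : G) (n : ℤ) (hn : c ^ n = 1) :
    ∃ d : ℤ, d ∣ n ∧ ∀ k : ℤ, (Commute (c ^ k) z ↔ d ∣ k) := by
  set S : AddSubgroup ℤ :=
    { carrier := {k | Commute (c ^ k) z}
      zero_mem' := by simp [Commute.one_left]
      add_mem' := by
        intro a b ha hb
        simpa [zpow_add] using ha.mul_left hb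
      neg_mem' := by
        intro a ha
        simpa [zpow_neg] using ha.inv_left } with hS
  obtain ⟨d, hd⟩ := Int.subgroup_cyclic S
  have hmem : ∀ k : ℤ, Commute (c ^ k) z ↔ d ∣ k := by
    intro k
    have : (k ∈ S) ↔ d ∣ k := by
      rw [hd]
      rw [← AddSubgroup.zmultiples_eq_closure]
      exact Int.mem_zmultiples_iff
    exact this
  refine ⟨d, ?_, hmem⟩
  rw [← hmem]
  simp [hn]

/-- Every finite p-group is good. -/
theorem goodGroup_of_pGroup (p : ℕ) (hp : p.Prime) (G : Type*) [Group G] [Finite G]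
    (hpG : ∀ g : G, ∃ k : ℕ, orderOf g = p ^ k) : GoodGroup G := by
  intro e hC c hc
  obtain ⟨m, hm⟩ := hpG c
  have hord : c ^ ((p ^ m : ℕ) : ℤ) = 1 := by
    rw [zpow_natCast, ← hm, pow_orderOf_eq_one]
  -- choose a generator for each z
  choose d hd1 hd2 using fun z : G => exists_gen c z _ hord
  -- each |d z| is a power of p
  have hdvd : ∀ z : G, (d z).natAbs ∣ p ^ m := by
    intro z
    have h' : (d z).natAbs ∣ ((p ^ m : ℕ) : ℤ).natAbs := Int.natAbs_dvd_natAbs.mpr (hd1 z)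
    rwa [Int.natAbs_natCast] at h'
  -- pick z₀ ∈ C maximizing |d z|
  obtain ⟨z₀, hz₀C, hz₀⟩ := Set.exists_max_image (conjClass e) (fun z => (d z).natAbs) hC ⟨c, hc⟩
  refine ⟨z₀, hz₀C, ?_⟩
  intro k hk h hh
  have hk' : d z₀ ∣ k := (hd2 z₀ k).mp hk
  -- every z ∈ C : d z ∣ d z₀
  have key : ∀ z ∈ conjClass e, d z ∣ d z₀ := by
    intro z hz
    rw [← Int.natAbs_dvd_natAbs]
    obtain ⟨i, hi, hieq⟩ := (Nat.dvd_prime_pow hp).mp (hdvd z)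
    obtain ⟨j, hj, hjeq⟩ := (Nat.dvd_prime_pow hp).mp (hdvd z₀)
    rw [hieq, hjeq]
    apply pow_dvd_pow
    have hle : p ^ i ≤ p ^ j := by
      rw [← hieq, ← hjeq]; exact hz₀ z hz
    exact (Nat.pow_le_pow_iff_right hp.one_lt).mp hle
  have hcent : Subgroup.closure (conjClass e) ≤ Subgroup.centralizer {c ^ k} := by
    rw [Subgroup.closure_le]
    intro z hz
    have : Commute (c ^ k) z := (hd2 z k).mpr ((key z hz).trans hk')
    exact Subgroup.mem_centralizer_singleton_iff.mpr this.symm.eq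
  have := Subgroup.mem_centralizer_singleton_iff.mp (hcent hh)
  exact this.symm
end

section
/- For every natural number n, the symmetric group on Fin n (the group of all permutations of Fin n) is good. -/
/-!
Let `c` be a permutation of a finite set. Pick one point on each cycle of `c`, fixed points
included, and let `σ` permute these representatives cyclically. If `c ^ k` commutes with
`z = σ * c * σ⁻¹`, it maps cycles of `z` to cycles of `z`, while it maps every cycle of `c` to
itself. The cycles of `z` are the images under `σ` of the cycles of `c`; the one through a
representative `y` also contains `c x`, where `x` is the previous representative, and locating
the images of `y` and of `c x` in the cycles of `c` shows that `c ^ k` fixes `y`. Hence `c ^ k`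
fixes every representative, so `c ^ k = 1`, and `z` is a conjugate of `c` commuting with no
nontrivial power of `c`.

This needs at least three cycles. With two cycles the transposition of the representatives
works unless both cycles are 2-cycles, and a single cycle of length at least 4 is handled by
transposing two consecutive points. What remains are the permutations of at most two points,
the 3-cycles of `S₃` and the double transpositions of `S₄`, whose conjugacy classes are
commutative. Either alternative makes the class good: take `z` as above, resp. `z = c`.
-/

open Equiv Equiv.Perm

section Group

variable {G : Type*} [Group G]

def PowersCommuteTrivially (c z : G) : Prop :=
  ∀ k : ℤ, Commute (c ^ k) z → c ^ k = 1

lemma mem_conjClass_iff {e x : G} : x ∈ conjClass e ↔ IsConj e x :=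
  isConj_iff.symm

lemma goodClass_conjClass_of_forall {e : G}
    (h : ∀ c, IsConj e c →
      (∃ g : G, PowersCommuteTrivially c (g * c * g⁻¹)) ∨ ∀ g : G, Commute c (g * c * g⁻¹)) :
    GoodClass (conjClass e) := by
  intro c hc
  rw [mem_conjClass_iff] at hc
  rcases h c hc with ⟨g, hg⟩ | hcomm
  · refine ⟨g * c * g⁻¹, mem_conjClass_iff.mpr (hc.trans (isConj_iff.mpr ⟨g, rfl⟩)),
      fun k hk x _ => ?_⟩
    rw [hg k hk, one_mul, mul_one]
  · refine ⟨c, mem_conjClass_iff.mpr hc, fun k _ x hx => ?_⟩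
    have hle : Subgroup.closure (conjClass e) ≤ Subgroup.centralizer {c ^ k} := by
      rw [Subgroup.closure_le]
      intro y hy
      obtain ⟨g, rfl⟩ := isConj_iff.mp (hc.symm.trans (mem_conjClass_iff.mp hy))
      exact Subgroup.mem_centralizer_singleton_iff.mpr ((hcomm g).zpow_left k).eq.symm
    exact (Subgroup.mem_centralizer_singleton_iff.mp (hle hx)).symm

end Group

namespace Equiv.Perm

variable {α : Type*} {c : Perm α}

lemma SameCycle.zpow_apply_eq_self {a b : α} (h : c.SameCycle a b) {k : ℤ}
    (ha : (c ^ k) a = a) : (c ^ k) b = b := by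
  obtain ⟨i, rfl⟩ := h
  rw [zpow_apply_comm, ha]

lemma zpow_apply_apply_comm (c : Perm α) (k : ℤ) (q : α) : (c ^ k) (c q) = c ((c ^ k) q) := by
  simpa using zpow_apply_comm c k 1 (x := q)

lemma SameCycle.apply_of_commute {z d : Perm α} (hd : Commute d z) {a b : α}
    (h : z.SameCycle a b) : z.SameCycle (d a) (d b) := by
  simpa [hd.mul_inv_cancel] using h.conj (g := d)

lemma exists_list_cycle_reps [Finite α] (c : Perm α) :
    ∃ l : List α, l.Pairwise (fun a b => ¬ c.SameCycle a b) ∧ ∀ a, ∃ r ∈ l, c.SameCycle a r := by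
  obtain ⟨L, hL, hmem⟩ := Finite.exists_univ_list (Quotient (SameCycle.setoid c))
  refine ⟨L.map Quotient.out, List.pairwise_map.mpr (hL.imp fun hne hsc => ?_),
    fun a => ⟨_, List.mem_map_of_mem (hmem ⟦a⟧),
      (Quotient.mk_out (s := SameCycle.setoid c) a).symm⟩⟩
  exact hne (Quotient.out_equiv_out.mp hsc)

lemma zpow_eq_one_of_forall_cycle_rep {l : List α} (hl : ∀ a, ∃ r ∈ l, c.SameCycle a r) {k : ℤ}
    (h : ∀ r ∈ l, (c ^ k) r = r) : c ^ k = 1 := by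
  ext a
  obtain ⟨r, hr, har⟩ := hl a
  exact har.symm.zpow_apply_eq_self (h r hr)

section CycleLength

variable [DecidableEq α] [Fintype α] {x : α}

lemma pow_apply_eq_self_iff_card_support_cycleOf_dvd (hx : c x ≠ x) {n : ℕ} :
    (c ^ n) x = x ↔ (c.cycleOf x).support.card ∣ n :=
  (c.isCycleOn_support_cycleOf x).pow_apply_eq
    (mem_support_cycleOf_iff.mpr ⟨SameCycle.refl c x, mem_support.mpr hx⟩)

lemma pow_apply_ne_self_of_lt_card_support_cycleOf {n : ℕ} (hn : 0 < n)
    (hlt : n < (c.cycleOf x).support.card) : (c ^ n) x ≠ x := by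
  have hx : c x ≠ x := two_le_card_support_cycleOf_iff.mp (by omega)
  rw [Ne, pow_apply_eq_self_iff_card_support_cycleOf_dvd hx]
  exact Nat.not_dvd_of_pos_of_lt hn hlt

lemma card_support_cycleOf_eq_two (hx : c x ≠ x) (h2 : c (c x) = x) :
    (c.cycleOf x).support.card = 2 :=
  le_antisymm
    (Nat.le_of_dvd two_pos
      ((pow_apply_eq_self_iff_card_support_cycleOf_dvd hx).mp (by simpa [sq] using h2)))
    (two_le_card_support_cycleOf_iff.mpr hx)

end CycleLength

lemma _root_.List.formPerm_apply_apply_ne_self [DecidableEq α] {l : List α} (hl : l.Nodup)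
    (h3 : 3 ≤ l.length) {r : α} (hr : r ∈ l) : l.formPerm (l.formPerm r) ≠ r := by
  have hcyc : l.formPerm.IsCycleOn (l.toFinset : Set α) := by simpa using hl.isCycleOn_formPerm
  intro h
  have hdvd := (hcyc.pow_apply_eq (List.mem_toFinset.mpr hr) (n := 2)).mp (by simpa [sq] using h)
  rw [List.toFinset_card_of_nodup hl] at hdvd
  have := Nat.le_of_dvd two_pos hdvd
  omega

section Conj

variable {σ : Perm α} {k : ℤ} {x y : α}

lemma zpow_apply_eq_self_of_commute_conj_of_fixed (hk : Commute (c ^ k) (σ * c * σ⁻¹))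
    (hx : c x = x) (hσx : σ x = y) (hσy : ∀ q, c.SameCycle y q → q ≠ y → σ q = q) :
    (c ^ k) y = y := by
  by_contra hne
  have hfix : σ⁻¹ ((c ^ k) y) = (c ^ k) y := inv_eq_iff_eq.mpr (hσy _ ⟨k, rfl⟩ hne).symm
  have hzy : (σ * c * σ⁻¹) y = y := by simp [← hσx, hx]
  have hzdy : (σ * c * σ⁻¹) ((c ^ k) y) = (c ^ k) y := by
    rw [← mul_apply, ← hk.eq, mul_apply, hzy]
  rw [mul_apply, mul_apply, hfix] at hzdy
  have hcdy : c ((c ^ k) y) = (c ^ k) y := (inv_eq_iff_eq.mpr hzdy.symm).symm.trans hfix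
  exact hne (zpow_apply_eq_self_of_apply_eq_self
    ((SameCycle.apply_eq_self_iff ⟨k, rfl⟩).mpr hcdy) k)

lemma zpow_apply_eq_self_of_commute_conj (hk : Commute (c ^ k) (σ * c * σ⁻¹))
    (hσx : σ x = y) (hσy : ∀ q, c.SameCycle y q → q ≠ y → σ q = q)
    {p : α} (hp : c.SameCycle x p) (hσp : σ p = p)
    (hsep : ¬ c.SameCycle y (σ⁻¹ ((c ^ k) p))) : (c ^ k) y = y := by
  by_contra hne
  have hfix : σ⁻¹ ((c ^ k) y) = (c ^ k) y := inv_eq_iff_eq.mpr (hσy _ ⟨k, rfl⟩ hne).symm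
  have hyp : (σ * c * σ⁻¹).SameCycle y p := by simpa [hσx, hσp] using hp.conj (g := σ)
  have hdyp := hyp.apply_of_commute hk
  rw [sameCycle_conj, hfix] at hdyp
  exact hsep ((SameCycle.refl c y).zpow_right.trans hdyp)

lemma powersCommuteTrivially_conj_of_cycle_reps {l : List α}
    (hl : l.Pairwise (fun a b => ¬ c.SameCycle a b)) (hcover : ∀ a, ∃ r ∈ l, c.SameCycle a r)
    (hsupp : ∀ q, σ q ≠ q → q ∈ l) (hσ2 : ∀ r ∈ l, σ (σ r) ≠ r) :
    PowersCommuteTrivially c (σ * c * σ⁻¹) := by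
  have : Std.Symm fun a b => ¬ c.SameCycle a b := ⟨fun _ _ h h' => h h'.symm⟩
  have hsep : ∀ a ∈ l, ∀ b ∈ l, a ≠ b → ¬ c.SameCycle a b := fun _ ha _ hb => hl.forall ha hb
  have hσinv : ∀ a, σ (σ⁻¹ a) = a := σ.apply_symm_apply
  have hinv_mem : ∀ r ∈ l, σ⁻¹ r ∈ l := fun r hr => by
    by_contra h
    have hfix : σ (σ⁻¹ r) = σ⁻¹ r := by_contra fun h' => h (hsupp _ h')
    rw [hσinv] at hfix
    exact h (hfix ▸ hr)
  have hfix : ∀ r ∈ l, ∀ q, c.SameCycle r q → q ≠ r → σ q = q := fun r hr q hq hne =>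
    by_contra fun h => hsep _ hr _ (hsupp q h) hne.symm hq
  intro k hk
  refine zpow_eq_one_of_forall_cycle_rep hcover fun y hy => ?_
  set x := σ⁻¹ y
  have hx : x ∈ l := hinv_mem y hy
  have hσx : σ x = y := hσinv y
  rcases eq_or_ne (c x) x with hcx | hcx
  · exact zpow_apply_eq_self_of_commute_conj_of_fixed hk hcx hσx (hfix y hy)
  have hxc : c.SameCycle x (c x) := sameCycle_apply_right.mpr (SameCycle.refl c x)
  refine zpow_apply_eq_self_of_commute_conj hk hσx (hfix y hy) hxc (hfix x hx _ hxc hcx) ?_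
  have hxd : c.SameCycle x ((c ^ k) (c x)) := hxc.zpow_right
  rcases eq_or_ne ((c ^ k) (c x)) x with h | h
  · -- `σ⁻¹ x` is the representative two steps before `y`; it is not `y` since `σ²` moves it
    rw [h]
    refine hsep _ hy _ (hinv_mem x hx) fun hyx => hσ2 _ (hinv_mem x hx) ?_
    rw [hσinv, ← hyx, hσx]
  · have hxy : x ≠ y := fun h' => hσ2 x hx (by rw [hσx, ← h', hσx, h'])
    rw [inv_eq_iff_eq.mpr (hfix x hx _ hxd h).symm]
    exact fun hy' => hsep _ hx _ hy hxy (hxd.trans hy'.symm)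

end Conj

section Swap

variable [DecidableEq α] [Fintype α]

lemma powersCommuteTrivially_swap_conj {x y : α} (hxy : ¬ c.SameCycle x y)
    (hx : (c.cycleOf x).support.card ≠ 2) (hcover : ∀ a, c.SameCycle a x ∨ c.SameCycle a y) :
    PowersCommuteTrivially c (swap x y * c * (swap x y)⁻¹) := by
  have hfixx : ∀ q, c.SameCycle x q → q ≠ x → swap x y q = q := fun q hq hqx =>
    swap_apply_of_ne_of_ne hqx fun h => hxy (h ▸ hq)
  have hfixy : ∀ q, c.SameCycle y q → q ≠ y → swap x y q = q := fun q hq hqy =>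
    swap_apply_of_ne_of_ne (fun h => hxy (h ▸ hq).symm) hqy
  intro k hk
  have hy : (c ^ k) y = y := by
    rcases eq_or_ne (c x) x with hcx | hcx
    · exact zpow_apply_eq_self_of_commute_conj_of_fixed hk hcx (swap_apply_left x y) hfixy
    have hcx2 : c (c x) ≠ x := fun h => hx (card_support_cycleOf_eq_two hcx h)
    -- since `x` lies on a cycle of length at least 3, `c x` and `c (c x)` are not both sent to `x`
    obtain ⟨p, hp, hpx, hdp⟩ : ∃ p, c.SameCycle x p ∧ p ≠ x ∧ (c ^ k) p ≠ x := by
      by_cases h : (c ^ k) (c x) = x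
      · refine ⟨c (c x), (SameCycle.refl c x).apply_right.apply_right, hcx2, ?_⟩
        rwa [zpow_apply_apply_comm, h]
      · exact ⟨c x, (SameCycle.refl c x).apply_right, hcx, h⟩
    have hxdp : c.SameCycle x ((c ^ k) p) := hp.zpow_right
    refine zpow_apply_eq_self_of_commute_conj hk (swap_apply_left x y) hfixy hp (hfixx p hp hpx) ?_
    rw [swap_inv, hfixx _ hxdp hdp]
    exact fun h => hxy (hxdp.trans h.symm)
  have hx' : (c ^ k) x = x := by
    rcases eq_or_ne (c y) y with hcy | hcy
    · exact zpow_apply_eq_self_of_commute_conj_of_fixed hk hcy (swap_apply_right x y) hfixx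
    have hyc : c.SameCycle y (c y) := (SameCycle.refl c y).apply_right
    refine zpow_apply_eq_self_of_commute_conj hk (swap_apply_right x y) hfixx hyc
      (hfixy _ hyc hcy) ?_
    rw [zpow_apply_apply_comm, hy, swap_inv, hfixy _ hyc hcy]
    exact fun h => hxy (sameCycle_apply_right.mp h)
  ext a
  rcases hcover a with h | h
  · exact h.symm.zpow_apply_eq_self hx'
  · exact h.symm.zpow_apply_eq_self hy

lemma zpow_apply_eq_self_of_commute_swap_conj {a : α} (h4 : 4 ≤ (c.cycleOf a).support.card)
    {k : ℤ} (hk : Commute (c ^ k) (swap a (c a) * c * (swap a (c a))⁻¹)) : (c ^ k) a = a := by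
  have h1 : c a ≠ a := by
    simpa using pow_apply_ne_self_of_lt_card_support_cycleOf (n := 1) one_pos (by omega)
  have h2 : c (c a) ≠ a := by
    simpa [pow_succ] using pow_apply_ne_self_of_lt_card_support_cycleOf (n := 2) two_pos (by omega)
  have h3 : c (c (c a)) ≠ a := by
    simpa [pow_succ] using
      pow_apply_ne_self_of_lt_card_support_cycleOf (n := 3) (by norm_num) (by omega)
  set u := (c ^ k) a
  have key : u = swap a (c a) (c (swap a (c a) (c u))) :=
    calc u = (c ^ k) ((swap a (c a) * c * (swap a (c a))⁻¹) (c a)) := by simp [u]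
      _ = (swap a (c a) * c * (swap a (c a))⁻¹) ((c ^ k) (c a)) := by
        rw [← mul_apply, hk.eq, mul_apply]
      _ = swap a (c a) (c (swap a (c a) (c u))) := by simp [zpow_apply_apply_comm, u]
  by_cases hu1 : c u = a
  · rw [hu1, swap_apply_left, swap_apply_of_ne_of_ne h2 (fun h => h1 (c.injective h))] at key
    exact (h3 (by rw [← key, hu1])).elim
  by_cases hu2 : c u = c a
  · exact c.injective hu2
  rw [swap_apply_of_ne_of_ne hu1 hu2] at key
  by_cases hv1 : c (c u) = a
  · rw [hv1, swap_apply_left] at key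
    exact (h3 (by rw [← key, hv1])).elim
  by_cases hv2 : c (c u) = c a
  · rwa [hv2, swap_apply_right] at key
  rw [swap_apply_of_ne_of_ne hv1 hv2] at key
  have hcc : (c ^ k) (c (c a)) = (c ^ k) a := by
    rw [zpow_apply_apply_comm, zpow_apply_apply_comm]
    exact key.symm
  exact (h2 ((c ^ k).injective hcc)).elim

end Swap

section Classification

variable [DecidableEq α] [Fintype α]

/-- Anything on at most two points, a 3-cycle of `S₃` or a double transposition of `S₄`. -/
def IsExceptional (c : Perm α) : Prop :=
  Fintype.card α ≤ 2 ∨ (Fintype.card α = 3 ∧ ∀ p, c p ≠ p) ∨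
    (Fintype.card α = 4 ∧ ∀ p, c p ≠ p ∧ c (c p) = p)

lemma exists_powersCommuteTrivially_or_isExceptional_of_forall_sameCycle {r : α}
    (hcover : ∀ a, c.SameCycle a r) :
    (∃ σ : Perm α, PowersCommuteTrivially c (σ * c * σ⁻¹)) ∨ c.IsExceptional := by
  have hcover' : ∀ a, ∃ r' ∈ [r], c.SameCycle a r' := fun a =>
    ⟨r, List.mem_singleton_self r, hcover a⟩
  rcases eq_or_ne (c r) r with hr | hr
  · exact Or.inl ⟨1, fun k _ => zpow_eq_one_of_forall_cycle_rep hcover'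
      (by simp [zpow_apply_eq_self_of_apply_eq_self hr])⟩
  have hcard : Fintype.card α = (c.cycleOf r).support.card := by
    rw [← Finset.card_univ]
    congr 1
    ext a
    simp only [Finset.mem_univ, true_iff, mem_support_cycleOf_iff]
    exact ⟨(hcover a).symm, mem_support.mpr hr⟩
  rcases le_or_gt 4 (Fintype.card α) with h4 | h3
  · refine Or.inl ⟨swap r (c r), fun k hk => zpow_eq_one_of_forall_cycle_rep hcover' ?_⟩
    simpa using zpow_apply_eq_self_of_commute_swap_conj (hcard ▸ h4) hk
  have hfpf : ∀ p, c p ≠ p := fun p h => hr ((hcover p).apply_eq_self_iff.mp h)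
  have := two_le_card_support_cycleOf_iff.mpr hr
  rcases (by omega : Fintype.card α ≤ 2 ∨ Fintype.card α = 3) with h | h
  · exact Or.inr (Or.inl h)
  · exact Or.inr (Or.inr (Or.inl ⟨h, hfpf⟩))

lemma exists_powersCommuteTrivially_or_isExceptional_of_two_cycles {x y : α}
    (hxy : ¬ c.SameCycle x y) (hcover : ∀ a, c.SameCycle a x ∨ c.SameCycle a y) :
    (∃ σ : Perm α, PowersCommuteTrivially c (σ * c * σ⁻¹)) ∨ c.IsExceptional := by
  by_cases hx : (c.cycleOf x).support.card = 2
  swap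
  · exact Or.inl ⟨_, powersCommuteTrivially_swap_conj hxy hx hcover⟩
  by_cases hy : (c.cycleOf y).support.card = 2
  swap
  · exact Or.inl ⟨_, powersCommuteTrivially_swap_conj (fun h => hxy h.symm) hy
      fun a => (hcover a).symm⟩
  have hmoved : ∀ r, (c.cycleOf r).support.card = 2 → c r ≠ r := fun r hr =>
    two_le_card_support_cycleOf_iff.mp hr.ge
  have hinvol : ∀ r, (c.cycleOf r).support.card = 2 → ∀ p, c.SameCycle p r →
      c p ≠ p ∧ c (c p) = p := fun r hr p hp => by
    refine ⟨fun h => hmoved r hr (hp.apply_eq_self_iff.mp h), ?_⟩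
    have hr2 : (c ^ (2 : ℤ)) r = r := by
      simpa using (pow_apply_eq_self_iff_card_support_cycleOf_dvd (hmoved r hr) (n := 2)).mpr
        (hr ▸ dvd_rfl)
    simpa [sq] using hp.symm.zpow_apply_eq_self hr2
  have hsupp : ∀ r, (c.cycleOf r).support.card = 2 → ∀ a,
      a ∈ (c.cycleOf r).support ↔ c.SameCycle a r := fun r hr a => by
    rw [mem_support_cycleOf_iff, mem_support, sameCycle_comm]
    exact and_iff_left (hmoved r hr)
  refine Or.inr (Or.inr (Or.inr ⟨?_, fun p => (hcover p).elim (hinvol x hx p) (hinvol y hy p)⟩))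
  have huniv : Finset.univ = (c.cycleOf x).support ∪ (c.cycleOf y).support := by
    ext a
    simp only [Finset.mem_univ, Finset.mem_union, hsupp x hx, hsupp y hy, hcover a]
  have hdisj : _root_.Disjoint (c.cycleOf x).support (c.cycleOf y).support :=
    Finset.disjoint_left.mpr fun a hax hay =>
      hxy (((hsupp x hx a).mp hax).symm.trans ((hsupp y hy a).mp hay))
  rw [← Finset.card_univ, huniv, Finset.card_union_of_disjoint hdisj, hx, hy]

theorem exists_powersCommuteTrivially_or_isExceptional (c : Perm α) :
    (∃ σ : Perm α, PowersCommuteTrivially c (σ * c * σ⁻¹)) ∨ c.IsExceptional := by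
  obtain ⟨l, hl, hcover⟩ := exists_list_cycle_reps c
  by_cases h3 : 3 ≤ l.length
  · exact Or.inl ⟨l.formPerm, powersCommuteTrivially_conj_of_cycle_reps hl hcover
      (fun _ => List.mem_of_formPerm_apply_ne)
      fun _ => List.formPerm_apply_apply_ne_self
        (hl.imp fun {a b} h (e : a = b) => h (e ▸ SameCycle.refl c a)) h3⟩
  match l, hl, hcover, h3 with
  | [], _, hcover, _ =>
    exact Or.inl ⟨1, fun k _ => zpow_eq_one_of_forall_cycle_rep hcover (by simp)⟩
  | [r], _, hcover, _ =>
    exact exists_powersCommuteTrivially_or_isExceptional_of_forall_sameCycle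
      fun a => by simpa using hcover a
  | [x, y], hl, hcover, _ =>
    exact exists_powersCommuteTrivially_or_isExceptional_of_two_cycles (by simpa using hl)
      fun a => by simpa using hcover a
  | _ :: _ :: _ :: _, _, _, h3 => exact absurd (by simp) h3

end Classification

lemma commute_conj_fin_two (c g : Perm (Fin 2)) : Commute c (g * c * g⁻¹) := by
  revert c g
  unfold Commute SemiconjBy
  decide

lemma commute_conj_fin_three (c : Perm (Fin 3)) (hc : ∀ p, c p ≠ p) (g : Perm (Fin 3)) :
    Commute c (g * c * g⁻¹) := by
  revert c g
  unfold Commute SemiconjBy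
  decide

set_option maxRecDepth 100000 in
lemma commute_conj_fin_four (c : Perm (Fin 4)) (hc : ∀ p, c p ≠ p ∧ c (c p) = p)
    (g : Perm (Fin 4)) : Commute c (g * c * g⁻¹) := by
  revert c g
  unfold Commute SemiconjBy
  decide

lemma IsExceptional.commute_conj {n : ℕ} {c : Perm (Fin n)} (h : c.IsExceptional)
    (g : Perm (Fin n)) : Commute c (g * c * g⁻¹) := by
  simp only [IsExceptional, Fintype.card_fin] at h
  rcases h with h | ⟨rfl, h⟩ | ⟨rfl, h⟩
  · interval_cases n
    · exact Subsingleton.elim _ _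
    · exact Subsingleton.elim _ _
    · exact commute_conj_fin_two c g
  · exact commute_conj_fin_three c h g
  · exact commute_conj_fin_four c h g

end Equiv.Perm

/-- Every symmetric group on finitely many letters is good. -/
theorem goodGroup_symmetricGroup (n : ℕ) : GoodGroup (Equiv.Perm (Fin n)) := by
  intro e _
  exact goodClass_conjClass_of_forall fun c _ =>
    (exists_powersCommuteTrivially_or_isExceptional c).imp_right (·.commute_conj)
end

section
/- For every natural number n ≥ 3, the dihedral group of order 2n (DihedralGroup n, generated by a rotation o of order n and a reflection s with s² = 1 and s * o * s⁻¹ = o⁻¹) is good. -/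
namespace DihedralGroupGood

open DihedralGroup

variable {n : ℕ}

@[simp] lemma inv_r (i : ZMod n) : (r i)⁻¹ = r (-i) := rfl
@[simp] lemma inv_sr (i : ZMod n) : (sr i)⁻¹ = sr i := rfl

lemma mem_class_r {i : ZMod n} {x : DihedralGroup n} (hx : x ∈ conjClass (r i)) :
    x = r i ∨ x = r (-i) := by
  obtain ⟨g, rfl⟩ := hx
  rcases g with j | j
  · left; simp [add_comm, sub_eq_iff_eq_add, add_assoc]
  · right; simp

lemma mem_class_sr {i : ZMod n} {x : DihedralGroup n} (hx : x ∈ conjClass (sr i)) :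
    ∃ m : ZMod n, x = sr (i + 2 * m) := by
  obtain ⟨g, rfl⟩ := hx
  rcases g with j | j
  · exact ⟨-j, by simp; ring⟩
  · exact ⟨j - i, by simp; ring⟩

lemma sr_mem_class {i : ZMod n} (m : ZMod n) : sr (i + 2 * m) ∈ conjClass (sr i) := by
  exact ⟨r (-m), by simp; ring⟩

lemma zpow_of_sq_one {G : Type*} [Group G] {c : G} (h : c * c = 1) (k : ℤ) :
    c ^ k = 1 ∨ c ^ k = c := by
  rcases Int.even_or_odd k with ⟨m, rfl⟩ | ⟨m, rfl⟩
  · left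
    rw [← two_mul, zpow_mul]
    have : c ^ (2 : ℤ) = 1 := by rw [zpow_two, h]
    rw [this, one_zpow]
  · right
    rw [zpow_add, zpow_mul]
    have : c ^ (2 : ℤ) = 1 := by rw [zpow_two, h]
    rw [this, one_zpow, one_mul, zpow_one]

end DihedralGroupGood

open DihedralGroup DihedralGroupGood in
/-- For n ≥ 3, the dihedral group of order 2n is good. -/
theorem goodGroup_dihedralGroup (n : ℕ) (hn : 3 ≤ n) : GoodGroup (DihedralGroup n) := by
  intro e _ c hc
  rcases e with i | i
  · -- rotation case: the closure consists of rotations, which all commute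
    refine ⟨c, hc, fun k _ h hh => ?_⟩
    obtain ⟨a, rfl⟩ : ∃ a, c = r a := by
      rcases mem_class_r hc with h' | h' <;> exact ⟨_, h'⟩
    refine Subgroup.closure_induction (fun x hx => ?_) ?_ ?_ ?_ hh
    · obtain ⟨b, rfl⟩ : ∃ b, x = r b := by
        rcases mem_class_r hx with h' | h' <;> exact ⟨_, h'⟩
      have : Commute (r a : DihedralGroup n) (r b) := by
        simp [Commute, SemiconjBy, add_comm]
      exact this.zpow_left k
    · simp
    · intro x y _ _ hx hy
      exact Commute.mul_right hx hy
    · intro x _ hx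
      exact Commute.inv_right hx
  · -- reflection case
    obtain ⟨a, rfl⟩ := mem_class_sr hc
    refine ⟨sr (i + 2 * (a - 1)), sr_mem_class _, fun k hk h hh => ?_⟩
    have hsq : sr (i + 2 * a) * sr (i + 2 * a) = 1 := sr_mul_self _
    rcases zpow_of_sq_one hsq k with h1 | h1
    · rw [h1, one_mul, mul_one]
    · rw [h1] at hk ⊢
      -- extract that 4 = 0 in ZMod n from hk
      simp only [sr_mul_sr, r.injEq] at hk
      have h4 : (4 : ZMod n) = 0 := by linear_combination -hk
      refine Subgroup.closure_induction (fun x hx => ?_) ?_ ?_ ?_ hh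
      · obtain ⟨m, rfl⟩ := mem_class_sr hx
        simp only [sr_mul_sr, r.injEq]
        linear_combination (m - a) * h4
      · simp
      · intro x y _ _ hx hy
        exact Commute.mul_right hx hy
      · intro x _ hx
        exact Commute.inv_right hx
end
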